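/- arXiv:1903.02462 — 2 statements merged into one kernel-verified Lean document; each statement's English description precedes it below -/
import Mathlib

section
/- Let G be a maximal outerplane graph on n ≥ 7 vertices with diagonal set D, and suppose the three diagonals {v_r, v_{r+2}}, {v_{r+2}, v_{r+5}}, {v_r, v_{r+5}} all belong to D (so v_r v_{r+2} v_{r+5} spans an internal triangle whose two sections have exactly one and exactly two internal vertices, respectively) and the vertices v_{r+1} and v_{r+4} both have degree 2 in G. Let G' be the graph obtained from G by contracting the four vertices v_{r+1}, v_{r+2}, v_{r+3}, v_{r+4} to a single new vertex x, deleting any resulting parallel edges. Then G' is a maximal outerplane graph on n − 3 vertices in which x has degree 2 and is adjacent to v_r and v_{r+5}, the number of essential pairs satisfies k(G') ≤ k(G) − 1, and γ(G) ≤ γ(G') + 1. -/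
open SimpleGraph

/-- `x` lies strictly inside the clockwise arc from `a` to `b` on the cycle `ℤ/nℤ`. -/
def InArc (n : ℕ) (a b x : ZMod n) : Prop :=
  0 < (x - a).val ∧ (x - a).val < (b - a).val

/-- `e` is a diagonal: an unordered pair of distinct, cyclically non-adjacent vertices. -/
def IsDiagonal (n : ℕ) (e : Sym2 (ZMod n)) : Prop :=
  ∃ a b : ZMod n, e = s(a, b) ∧ a ≠ b ∧ a + 1 ≠ b ∧ b + 1 ≠ a

/-- Two diagonals (with four pairwise distinct endpoints) cross: exactly one endpoint of the
second lies strictly inside the clockwise arc determined by the first. -/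
def Crosses (n : ℕ) (e f : Sym2 (ZMod n)) : Prop :=
  ∃ a b c d : ZMod n, e = s(a, b) ∧ f = s(c, d) ∧
    a ≠ c ∧ a ≠ d ∧ b ≠ c ∧ b ≠ d ∧ Xor' (InArc n a b c) (InArc n a b d)

/-- The graph on `ℤ/nℤ` consisting of the boundary cycle together with a diagonal set `D`. -/
def mog (n : ℕ) (D : Finset (Sym2 (ZMod n))) : SimpleGraph (ZMod n) :=
  SimpleGraph.fromEdgeSet ({e | ∃ i : ZMod n, e = s(i, i + 1)} ∪ (D : Set (Sym2 (ZMod n))))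

/-- `D` is a triangulating diagonal set of the convex `n`-gon: all members are diagonals,
they are pairwise non-crossing, and there are `n - 3` of them. -/
def IsTriangulation (n : ℕ) (D : Finset (Sym2 (ZMod n))) : Prop :=
  (∀ e ∈ D, IsDiagonal n e) ∧ (∀ e ∈ D, ∀ f ∈ D, ¬ Crosses n e f) ∧ D.card = n - 3

/-- `S` is a dominating set of `G`. -/
def IsDominating {V : Type*} (G : SimpleGraph V) (S : Set V) : Prop :=
  ∀ v, v ∈ S ∨ ∃ u ∈ S, G.Adj u v

/-- The domination number of `G`. -/
noncomputable def domNum {V : Type*} (G : SimpleGraph V) : ℕ :=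
  sInf {k | ∃ S : Set V, IsDominating G S ∧ S.ncard = k}

/-- `v` has degree `2` in `G`. -/
def Deg2 {V : Type*} (G : SimpleGraph V) (v : V) : Prop :=
  (G.neighborSet v).ncard = 2

/-- The ordered pair `(r, s)` is an essential pair of the graph `G` on `ℤ/nℤ`:
`r` and `s` are consecutive degree-2 vertices and the clockwise boundary path
`C[r,s]` has at least `3` edges. -/
def Essential (n : ℕ) (G : SimpleGraph (ZMod n)) (r s : ZMod n) : Prop :=
  Deg2 G r ∧ Deg2 G s ∧ (∀ x, InArc n r s x → ¬ Deg2 G x) ∧ 3 ≤ (s - r).val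

/-- The number of essential pairs of the graph `G` on `ℤ/nℤ`. -/
noncomputable def numEssential (n : ℕ) (G : SimpleGraph (ZMod n)) : ℕ :=
  {p : ZMod n × ZMod n | Essential n G p.1 p.2}.ncard

/-- The vertices of the section `G[r,s]`, i.e. of the clockwise boundary path `C[r,s]`. -/
def sectVerts (n : ℕ) (r s : ZMod n) : Set (ZMod n) :=
  {x | (x - r).val ≤ (s - r).val}

/-- The order-preserving embedding of `ℤ/mℤ` into `ℤ/nℤ` sending `0` to `a`,
`1` to `a + 1`, …, used to identify a reduced graph on `m` vertices with the induced
subgraph of a graph on `ℤ/nℤ` obtained by deleting an arc of `n - m` vertices. -/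
def arcEmb (n m : ℕ) (a : ZMod n) (i : ZMod m) : ZMod n := a + (i.val : ZMod n)

/-- The projection of `ℤ/nℤ` onto `ℤ/mℤ` contracting the `c + 1` vertices
`a, a + 1, …, a + c` to the single vertex `0` and relabelling the remaining
vertices consecutively. -/
def arcProj (n m : ℕ) (a : ZMod n) (c : ℕ) (v : ZMod n) : ZMod m :=
  if (v - a).val ≤ c then 0 else (((v - a).val - c : ℕ) : ZMod m)

/-- The contraction of a graph along a surjection-style projection `p`: distinct vertices
`a`, `b` are adjacent iff some preimages of them are adjacent. -/
def contractGraph {V W : Type*} (G : SimpleGraph V) (p : V → W) : SimpleGraph W where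
  Adj a b := a ≠ b ∧ ∃ u v : V, p u = a ∧ p v = b ∧ G.Adj u v
  symm := by
    constructor
    rintro a b ⟨hab, u, v, hu, hv, huv⟩
    exact ⟨hab.symm, v, u, hv, hu, huv.symm⟩
  loopless := by constructor; rintro a ⟨h, -⟩; exact h rfl

/-!
Every diagonal of `G` lies in one of the two sections cut off by the chord `v_r v_{r+5}`, and the
bound `m - 1` on non-crossing chords of a path of length `m` forces the outer section to carry
exactly `n - 6` of them; their images, together with the ear at the new vertex `x`, triangulate
the `(n - 3)`-gon. Away from the contracted block adjacencies and degrees do not change, so every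
essential pair of `G'` lifts to one of `G` with the same boundary length, while `(v_{r+1}, v_{r+4})`
is an essential pair of `G` that is not a lift. A minimum dominating set of `G'` becomes one of `G`
by replacing `x` with `v_{r+2}, v_{r+4}`, or, when `x` is dominated by `v_r` (resp. `v_{r+5}`),
by adding `v_{r+3}` (resp. `v_{r+2}`).
-/

section Offsets

variable {n : ℕ}

theorem exists_eq_add_natCast [NeZero n] (p x : ZMod n) : ∃ i < n, x = p + (i : ZMod n) :=
  ⟨(x - p).val, ZMod.val_lt _, by rw [ZMod.natCast_zmod_val]; ring⟩

theorem natCast_inj_of_lt {i j : ℕ} (hi : i < n) (hj : j < n) : (i : ZMod n) = j ↔ i = j := by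
  rw [ZMod.natCast_eq_natCast_iff', Nat.mod_eq_of_lt hi, Nat.mod_eq_of_lt hj]

theorem add_natCast_inj (p : ZMod n) {i j : ℕ} (hi : i < n) (hj : j < n) :
    p + (i : ZMod n) = p + j ↔ i = j := by
  rw [add_right_inj, natCast_inj_of_lt hi hj]

theorem sub_one_eq_add_natCast [NeZero n] (u : ZMod n) :
    u - 1 = u + ((n - 1 : ℕ) : ZMod n) := by
  rw [Nat.cast_sub (Nat.one_le_iff_ne_zero.mpr (NeZero.ne n)), ZMod.natCast_self]; ring

theorem val_add_natCast_sub (p : ZMod n) {i j : ℕ} (hi : i < n) (hj : j < n) :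
    (p + (i : ZMod n) - (p + j)).val = if j ≤ i then i - j else n - (j - i) := by
  rw [add_sub_add_left_eq_sub]
  split_ifs with h
  · rw [← Nat.cast_sub h, ZMod.val_natCast_of_lt (by omega)]
  · rw [show (i : ZMod n) - j = ((n - (j - i) : ℕ) : ZMod n) by
      rw [Nat.cast_sub (by omega), Nat.cast_sub (by omega), ZMod.natCast_self]; ring,
      ZMod.val_natCast_of_lt (by omega)]

theorem val_add_natCast_sub_self (p : ZMod n) {i : ℕ} (hi : i < n) :
    (p + (i : ZMod n) - p).val = i := by
  rw [add_sub_cancel_left, ZMod.val_natCast_of_lt hi]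

theorem inArc_add_natCast_iff [NeZero n] (p : ZMod n) {i j x : ℕ} (hi : i < n) (hj : j < n)
    (hx : x < n) :
    InArc n (p + i) (p + j) (p + x) ↔
      (i < x ∧ (j < i ∨ x < j)) ∨ (x < i ∧ x < j ∧ j < i) := by
  rw [InArc, val_add_natCast_sub p hx hi, val_add_natCast_sub p hj hi]
  split_ifs <;> omega

theorem add_natCast_mem_sectVerts_add_natCast_iff [NeZero n] (p : ZMod n) {i j x : ℕ}
    (hi : i < n) (hj : j < n) (hx : x < n) : p + (x : ZMod n) ∈ sectVerts n (p + i) (p + j) ↔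
      (i ≤ x ∧ (x ≤ j ∨ j < i)) ∨ (x ≤ j ∧ j < i) := by
  rw [sectVerts, Set.mem_ofPred_eq, val_add_natCast_sub p hx hi, val_add_natCast_sub p hj hi]
  split_ifs <;> omega

theorem add_natCast_mem_sectVerts_self_add_iff [NeZero n] (p : ZMod n) {j x : ℕ} (hj : j < n)
    (hx : x < n) : p + (x : ZMod n) ∈ sectVerts n p (p + j) ↔ x ≤ j := by
  rw [sectVerts, Set.mem_ofPred_eq, val_add_natCast_sub_self p hx, val_add_natCast_sub_self p hj]

theorem add_natCast_mem_sectVerts_add_self_iff [NeZero n] (p : ZMod n) {j x : ℕ} (hj0 : 0 < j)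
    (hj : j < n) (hx : x < n) :
    p + (x : ZMod n) ∈ sectVerts n (p + j) p ↔ x = 0 ∨ j ≤ x := by
  have h := val_add_natCast_sub p (i := 0) (j := j) (by omega) hj
  rw [Nat.cast_zero, add_zero] at h
  rw [sectVerts, Set.mem_ofPred_eq, val_add_natCast_sub p hx hj, h]
  split_ifs at h ⊢ <;> omega

end Offsets

theorem crosses_of_lt {n : ℕ} [NeZero n] (p : ZMod n) {i j k l : ℕ}
    (hik : i < k) (hkj : k < j) (hjl : j < l) (hl : l < n) :
    Crosses n s(p + i, p + j) s(p + k, p + l) := by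
  refine ⟨_, _, _, _, rfl, rfl, ?_, ?_, ?_, ?_, Or.inl ⟨?_, ?_⟩⟩
  all_goals first
    | rw [ne_eq, add_natCast_inj p (by omega) (by omega)]; omega
    | rw [inArc_add_natCast_iff p (by omega) (by omega) (by omega)]; omega

theorem lt_of_crosses {n : ℕ} [NeZero n] (p : ZMod n) {i j k l : ℕ}
    (hij : i < j) (hkl : k < l) (hj : j < n) (hl : l < n)
    (h : Crosses n s(p + i, p + j) s(p + k, p + l)) :
    (i < k ∧ k < j ∧ j < l) ∨ (k < i ∧ i < l ∧ l < j) := by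
  obtain ⟨a, b, c, d, he, hf, hac, had, hbc, hbd, hx⟩ := h
  rcases Sym2.eq_iff.mp he with ⟨rfl, rfl⟩ | ⟨rfl, rfl⟩ <;>
  rcases Sym2.eq_iff.mp hf with ⟨rfl, rfl⟩ | ⟨rfl, rfl⟩ <;>
  rcases hx with ⟨hx, hx'⟩ | ⟨hx, hx'⟩ <;>
  simp (disch := omega) only [ne_eq, add_natCast_inj, inArc_add_natCast_iff] at * <;>
  omega

theorem card_le_of_nonCrossing (M : ℕ) (F : Finset (ℕ × ℕ))
    (hF : ∀ q ∈ F, q.1 + 2 ≤ q.2 ∧ q.2 ≤ M)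
    (hnc : ∀ q ∈ F, ∀ q' ∈ F, ¬(q.1 < q'.1 ∧ q'.1 < q.2 ∧ q.2 < q'.2)) :
    F.card ≤ M - 1 := by
  induction M using Nat.strong_induction_on generalizing F with
  | _ M ih =>
  rcases F.eq_empty_or_nonempty with rfl | hne
  · simp
  -- Contract the point just after the left end of a shortest chord `I`: it is an endpoint of
  -- no chord, and only `I` itself can become too short.
  obtain ⟨I, hI, hmin⟩ := F.exists_min_image (fun q => q.2 - q.1) hne
  have hIF := hF I hI
  set δ : ℕ → ℕ := fun y => if I.1 + 1 < y then y - 1 else y with hδ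
  have hfree : ∀ q ∈ F, q.1 ≠ I.1 + 1 ∧ q.2 ≠ I.1 + 1 := by
    intro q hq
    have := hF q hq; have := hmin q hq; have := hnc I hI q hq; have := hnc q hq I hI
    omega
  have hmono : ∀ q ∈ F, ∀ q' ∈ F,
      (q.1 < q'.1 ↔ δ q.1 < δ q'.1) ∧ (q.1 < q'.2 ↔ δ q.1 < δ q'.2) ∧
      (q.2 < q'.1 ↔ δ q.2 < δ q'.1) ∧ (q.2 < q'.2 ↔ δ q.2 < δ q'.2) := by
    intro q hq q' hq'
    have := hfree q hq; have := hfree q' hq'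
    simp only [hδ]; split_ifs <;> omega
  set F' := (F.erase I).image (fun q => (δ q.1, δ q.2))
  have hcard : F'.card = F.card - 1 := by
    rw [Finset.card_image_of_injOn, Finset.card_erase_of_mem hI]
    intro q hq q' hq' h
    have h1 := hmono q (Finset.mem_of_mem_erase hq) q' (Finset.mem_of_mem_erase hq')
    have h2 := hmono q' (Finset.mem_of_mem_erase hq') q (Finset.mem_of_mem_erase hq)
    simp only [Prod.mk.injEq] at h
    exact Prod.ext (by omega) (by omega)
  have hF' : ∀ q ∈ F', q.1 + 2 ≤ q.2 ∧ q.2 ≤ M - 1 := by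
    simp only [F', Finset.mem_image, Finset.mem_erase]
    rintro _ ⟨q, ⟨hqI, hq⟩, rfl⟩
    have := hF q hq; have := hfree q hq; have := hmin q hq
    have : q.1 ≠ I.1 ∨ q.2 ≠ I.2 := by
      by_contra! h; exact hqI (Prod.ext h.1 h.2)
    simp only [hδ]; split_ifs <;> omega
  have hnc' : ∀ q ∈ F', ∀ q' ∈ F', ¬(q.1 < q'.1 ∧ q'.1 < q.2 ∧ q.2 < q'.2) := by
    simp only [F', Finset.mem_image, Finset.mem_erase]
    rintro _ ⟨q, ⟨-, hq⟩, rfl⟩ _ ⟨q', ⟨-, hq'⟩, rfl⟩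
    have := hnc q hq q' hq'; have := hmono q hq q' hq'; have := hmono q' hq' q hq
    dsimp only
    omega
  have := ih (M - 1) (by omega) F' hF' hnc'
  omega

section Triangulation

variable {n : ℕ}

theorem isDiagonal_mk_iff {u v : ZMod n} :
    IsDiagonal n s(u, v) ↔ u ≠ v ∧ u + 1 ≠ v ∧ v + 1 ≠ u := by
  constructor
  · rintro ⟨a, b, he, hab, hab1, hba1⟩
    rcases Sym2.eq_iff.mp he with ⟨rfl, rfl⟩ | ⟨rfl, rfl⟩
    exacts [⟨hab, hab1, hba1⟩, ⟨hab.symm, hba1, hab1⟩]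
  · exact fun h => ⟨u, v, rfl, h⟩

theorem mog_adj_iff (D : Finset (Sym2 (ZMod n))) (u v : ZMod n) :
    (mog n D).Adj u v ↔ ((∃ i, s(u, v) = s(i, i + 1)) ∨ s(u, v) ∈ D) ∧ u ≠ v := by
  simp only [mog, fromEdgeSet_adj, Set.mem_union, Set.mem_ofPred_eq, Finset.mem_coe]

theorem mog_adj_of_eq_add_one [Fact (1 < n)] (D : Finset (Sym2 (ZMod n))) {u v : ZMod n}
    (h : v = u + 1) : (mog n D).Adj u v := by
  subst h
  exact (mog_adj_iff D _ _).mpr ⟨Or.inl ⟨u, rfl⟩, by simp⟩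

theorem mog_adj_of_mem {D : Finset (Sym2 (ZMod n))} (hD : ∀ e ∈ D, IsDiagonal n e)
    {u v : ZMod n} (he : s(u, v) ∈ D) : (mog n D).Adj u v :=
  (mog_adj_iff D u v).mpr ⟨Or.inr he, (isDiagonal_mk_iff.mp (hD _ he)).1⟩

theorem not_deg2_of_adj {V : Type*} [Finite V] {G : SimpleGraph V} {v a b c : V}
    (ha : G.Adj v a) (hb : G.Adj v b) (hc : G.Adj v c) (hab : a ≠ b) (hac : a ≠ c)
    (hbc : b ≠ c) : ¬ Deg2 G v := by
  intro h
  have hsub : ({a, b, c} : Set V) ⊆ G.neighborSet v := by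
    rintro x (rfl | rfl | rfl) <;> assumption
  have := Set.ncard_le_ncard hsub
  rw [Set.ncard_eq_three.mpr ⟨a, b, c, hab, hac, hbc, rfl⟩] at this
  rw [Deg2] at h
  omega

theorem not_deg2_of_mem [NeZero n] (hn : 3 ≤ n) {D : Finset (Sym2 (ZMod n))}
    (hD : ∀ e ∈ D, IsDiagonal n e) {u v : ZMod n} (he : s(v, u) ∈ D) :
    ¬ Deg2 (mog n D) v := by
  have : Fact (1 < n) := ⟨by omega⟩
  obtain ⟨-, hvu, huv⟩ := isDiagonal_mk_iff.mp (hD _ he)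
  refine not_deg2_of_adj (mog_adj_of_eq_add_one D rfl)
    ((mog_adj_of_eq_add_one D (sub_add_cancel v 1).symm).symm) (mog_adj_of_mem hD he)
    ?_ hvu ?_
  · rw [sub_one_eq_add_natCast, ← Nat.cast_one, ne_eq, add_natCast_inj v (by omega) (by omega)]
    omega
  · rintro rfl; exact huv (sub_add_cancel v 1)

noncomputable def diagsIn (n : ℕ) (D : Finset (Sym2 (ZMod n))) (p q : ZMod n) :
    Finset (Sym2 (ZMod n)) := by
  classical exact D.filter fun e => ∀ x ∈ e, x ∈ sectVerts n p q

theorem mem_diagsIn_iff {D : Finset (Sym2 (ZMod n))} {p q : ZMod n} {e : Sym2 (ZMod n)} :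
    e ∈ diagsIn n D p q ↔ e ∈ D ∧ ∀ x ∈ e, x ∈ sectVerts n p q := by
  classical
  unfold diagsIn
  exact Finset.mem_filter

theorem mem_diagsIn_mk_iff {D : Finset (Sym2 (ZMod n))} {p q u v : ZMod n} :
    s(u, v) ∈ diagsIn n D p q ↔
      s(u, v) ∈ D ∧ u ∈ sectVerts n p q ∧ v ∈ sectVerts n p q := by
  simp [mem_diagsIn_iff, Sym2.mem_iff]

theorem left_mem_sectVerts (p q : ZMod n) : p ∈ sectVerts n p q := by
  simp [sectVerts]

theorem right_mem_sectVerts (p q : ZMod n) : q ∈ sectVerts n p q := by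
  simp [sectVerts]

theorem diagsIn_subset (D : Finset (Sym2 (ZMod n))) (p q : ZMod n) : diagsIn n D p q ⊆ D :=
  fun _ he => (mem_diagsIn_iff.mp he).1

variable [NeZero n] {D : Finset (Sym2 (ZMod n))}

theorem exists_of_mem_diagsIn (hdiag : ∀ e ∈ D, IsDiagonal n e) {p : ZMod n} {M : ℕ}
    (hM : M < n) {e : Sym2 (ZMod n)} (he : e ∈ diagsIn n D p (p + M)) :
    ∃ i j : ℕ, i + 2 ≤ j ∧ j ≤ M ∧ s(p + i, p + j) = e := by
  obtain ⟨heD, hsect⟩ := mem_diagsIn_iff.mp he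
  obtain ⟨u, v, rfl, huv, hu1, hv1⟩ := hdiag e heD
  obtain ⟨i, hi, rfl⟩ := exists_eq_add_natCast p u
  obtain ⟨j, hj, rfl⟩ := exists_eq_add_natCast p v
  have hiM := (add_natCast_mem_sectVerts_self_add_iff p hM hi).mp (hsect _ (Sym2.mem_mk_left _ _))
  have hjM := (add_natCast_mem_sectVerts_self_add_iff p hM hj).mp (hsect _ (Sym2.mem_mk_right _ _))
  rw [add_assoc, ← Nat.cast_add_one] at hu1 hv1
  rw [ne_eq, add_natCast_inj p hi hj] at huv
  rcases lt_or_gt_of_ne huv with h | h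
  · rw [ne_eq, add_natCast_inj p (by omega) hj] at hu1
    exact ⟨i, j, by omega, hjM, rfl⟩
  · rw [ne_eq, add_natCast_inj p (by omega) hi] at hv1
    exact ⟨j, i, by omega, hiM, Sym2.eq_swap⟩

theorem card_diagsIn_le (hdiag : ∀ e ∈ D, IsDiagonal n e)
    (hnc : ∀ e ∈ D, ∀ f ∈ D, ¬ Crosses n e f) (p q : ZMod n) :
    (diagsIn n D p q).card ≤ (q - p).val - 1 := by
  obtain ⟨M, hM, rfl⟩ := exists_eq_add_natCast p q
  let F := (Finset.range n ×ˢ Finset.range n).filter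
    fun ij => ij.1 + 2 ≤ ij.2 ∧ ij.2 ≤ M ∧ s(p + ij.1, p + ij.2) ∈ D
  have hF : ∀ ij ∈ F,
      ij.2 < n ∧ ij.1 + 2 ≤ ij.2 ∧ ij.2 ≤ M ∧ s(p + ij.1, p + ij.2) ∈ D := by
    intro ij hij
    simp only [F, Finset.mem_filter, Finset.mem_product, Finset.mem_range] at hij
    exact ⟨hij.1.2, hij.2⟩
  calc (diagsIn n D p (p + M)).card ≤ F.card := by
        refine Finset.card_le_card_of_surjOn (fun ij => s(p + ij.1, p + ij.2)) fun e he => ?_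
        obtain ⟨i, j, hij, hjM, rfl⟩ := exists_of_mem_diagsIn hdiag hM he
        refine ⟨(i, j), ?_, rfl⟩
        simp only [F, Finset.coe_filter, Finset.mem_product, Finset.mem_range, Set.mem_ofPred_eq]
        exact ⟨⟨by omega, by omega⟩, hij, hjM, (mem_diagsIn_iff.mp he).1⟩
    _ ≤ M - 1 := by
        refine card_le_of_nonCrossing M F (fun ij hij => ⟨(hF ij hij).2.1, (hF ij hij).2.2.1⟩)
          (fun ij hij kl hkl hc => ?_)
        exact hnc _ (hF ij hij).2.2.2 _ (hF kl hkl).2.2.2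
          (crosses_of_lt p hc.1 hc.2.1 hc.2.2 (hF kl hkl).1)
    _ = (p + M - p).val - 1 := by rw [val_add_natCast_sub_self p hM]

theorem mem_diagsIn_or_mem_diagsIn (hdiag : ∀ e ∈ D, IsDiagonal n e)
    (hnc : ∀ e ∈ D, ∀ f ∈ D, ¬ Crosses n e f) {p q : ZMod n} (hpq : s(p, q) ∈ D)
    {e : Sym2 (ZMod n)} (he : e ∈ D) : e ∈ diagsIn n D p q ∨ e ∈ diagsIn n D q p := by
  obtain ⟨M, hM, rfl⟩ := exists_eq_add_natCast p q
  have hM0 : 0 < M := by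
    by_contra h
    exact (isDiagonal_mk_iff.mp (hdiag _ hpq)).1 (by simp [show M = 0 by omega])
  have hcross : ∀ {x y : ℕ}, 0 < x → x < M → M < y → y < n →
      Crosses n s(p, p + M) s(p + x, p + y) := fun h0 hxM hMy hy => by
    simpa using crosses_of_lt p h0 hxM hMy hy
  obtain ⟨u, v, rfl, -, -, -⟩ := hdiag e he
  obtain ⟨i, hi, rfl⟩ := exists_eq_add_natCast p u
  obtain ⟨j, hj, rfl⟩ := exists_eq_add_natCast p v
  simp only [mem_diagsIn_mk_iff, he, true_and, add_natCast_mem_sectVerts_self_add_iff p hM hi,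
    add_natCast_mem_sectVerts_self_add_iff p hM hj,
    add_natCast_mem_sectVerts_add_self_iff p hM0 hM hi,
    add_natCast_mem_sectVerts_add_self_iff p hM0 hM hj]
  by_contra h
  rcases (by omega : (0 < i ∧ i < M ∧ M < j) ∨ (0 < j ∧ j < M ∧ M < i)) with h' | h'
  · exact hnc _ hpq _ he (hcross h'.1 h'.2.1 h'.2.2 hj)
  · exact hnc _ hpq _ he (Sym2.eq_swap (a := p + (i : ZMod n)) ▸ hcross h'.1 h'.2.1 h'.2.2 hi)

theorem card_diagsIn (hD : IsTriangulation n D) {p q : ZMod n} (hpq : s(p, q) ∈ D) :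
    (diagsIn n D p q).card = (q - p).val - 1 := by
  have hA := card_diagsIn_le hD.1 hD.2.1 p q
  have hB := card_diagsIn_le hD.1 hD.2.1 q p
  have hunion : D ⊆ diagsIn n D p q ∪ diagsIn n D q p := fun e he =>
    Finset.mem_union.mpr (mem_diagsIn_or_mem_diagsIn hD.1 hD.2.1 hpq he)
  have hinter : s(p, q) ∈ diagsIn n D p q ∩ diagsIn n D q p := by
    simp only [Finset.mem_inter, mem_diagsIn_mk_iff, left_mem_sectVerts, right_mem_sectVerts,
      hpq, and_self]
  have hval : (q - p).val + (p - q).val = n := by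
    have hqp : q - p ≠ 0 := sub_ne_zero.mpr (isDiagonal_mk_iff.mp (hD.1 _ hpq)).1.symm
    rw [show p - q = -(q - p) by ring, ZMod.neg_val, if_neg hqp]
    have := ZMod.val_lt (q - p)
    omega
  have := Finset.card_union_add_card_inter (diagsIn n D p q) (diagsIn n D q p)
  have := Finset.card_le_card hunion
  have := Finset.card_le_card (Finset.union_subset (diagsIn_subset D p q) (diagsIn_subset D q p))
  have := Finset.card_pos.mpr ⟨_, hinter⟩
  have : D.card = n - 3 := hD.2.2
  have := ZMod.val_lt (q - p)
  omega

end Triangulation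

def arcLift (n c : ℕ) (a : ZMod n) (j : ZMod (n - c)) : ZMod n :=
  a + ((c + j.val : ℕ) : ZMod n)

section ArcProj

variable {n c : ℕ} (a : ZMod n)

theorem arcProj_add_natCast (m : ℕ) {k : ℕ} (hk : k < n) :
    arcProj n m a c (a + k) = if k ≤ c then 0 else ((k - c : ℕ) : ZMod m) := by
  rw [arcProj, add_sub_cancel_left, ZMod.val_natCast_of_lt hk]

theorem arcProj_arcLift [NeZero (n - c)] (j : ZMod (n - c)) :
    arcProj n (n - c) a c (arcLift n c a j) = j := by
  have := ZMod.val_lt j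
  rw [arcLift, arcProj_add_natCast a _ (by omega)]
  split_ifs with h
  · exact ((ZMod.val_eq_zero j).mp (by omega)).symm
  · rw [Nat.add_sub_cancel_left, ZMod.natCast_zmod_val]

theorem arcLift_injective [NeZero (n - c)] : Function.Injective (arcLift n c a) :=
  Function.LeftInverse.injective (arcProj_arcLift a)

theorem arcProj_eq_zero_iff [NeZero n] [NeZero (n - c)] {v : ZMod n} :
    arcProj n (n - c) a c v = 0 ↔ (v - a).val ≤ c := by
  have := ZMod.val_lt (v - a)
  have := NeZero.ne (n - c)
  unfold arcProj
  split_ifs with h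
  · simp [h]
  · simp only [h, iff_false]
    intro h0
    have := congrArg ZMod.val h0
    rw [ZMod.val_natCast_of_lt (by omega), ZMod.val_zero] at this
    omega

theorem arcLift_arcProj [NeZero n] [NeZero (n - c)] {v : ZMod n}
    (hv : arcProj n (n - c) a c v ≠ 0) :
    arcLift n c a (arcProj n (n - c) a c v) = v := by
  obtain ⟨k, hk, rfl⟩ := exists_eq_add_natCast a v
  rw [ne_eq, arcProj_eq_zero_iff, val_add_natCast_sub_self a hk] at hv
  rw [arcProj_add_natCast a _ hk, if_neg hv, arcLift, ZMod.val_natCast_of_lt (by omega)]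
  congr 2
  omega

theorem arcProj_add_one [NeZero n] [NeZero (n - c)] (v : ZMod n) :
    arcProj n (n - c) a c (v + 1) = arcProj n (n - c) a c v ∨
      arcProj n (n - c) a c (v + 1) = arcProj n (n - c) a c v + 1 := by
  obtain ⟨k, hk, rfl⟩ := exists_eq_add_natCast a v
  rw [arcProj_add_natCast a _ hk]
  rcases (by omega : k + 1 < n ∨ k + 1 = n) with h | h
  · rw [add_assoc, ← Nat.cast_add_one, arcProj_add_natCast a _ h]
    rcases (by omega : k < c ∨ k = c ∨ c < k) with hkc | rfl | hkc
    · simp [hkc.le, (by omega : k + 1 ≤ c)]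
    · simp
    · simp only [if_neg (by omega : ¬k + 1 ≤ c), if_neg (by omega : ¬k ≤ c)]
      right; rw [Nat.sub_add_comm hkc.le]; push_cast; rfl
  · have hav : a + (k : ZMod n) + 1 = a := by
      rw [add_assoc, ← Nat.cast_add_one, h, ZMod.natCast_self, add_zero]
    rw [hav, arcProj, sub_self, ZMod.val_zero, if_pos (Nat.zero_le c)]
    split_ifs with hkc
    · exact Or.inl rfl
    · right
      rw [← Nat.cast_one, ← Nat.cast_add, (by omega : k - c + 1 = n - c), ZMod.natCast_self]

theorem arcProj_arcLift_add_one [NeZero (n - c)] (j : ZMod (n - c)) :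
    arcProj n (n - c) a c (arcLift n c a j + 1) = j + 1 := by
  have := ZMod.val_lt j
  rw [arcLift, add_assoc, ← Nat.cast_one, ← Nat.cast_add]
  rcases (by omega : c + j.val + 1 < n ∨ c + j.val + 1 = n) with h | h
  · rw [arcProj_add_natCast a _ h, if_neg (by omega), (by omega : c + j.val + 1 - c = j.val + 1),
      Nat.cast_add, ZMod.natCast_zmod_val, Nat.cast_one]
  · rw [h, ZMod.natCast_self, add_zero, arcProj, sub_self, ZMod.val_zero, if_pos (Nat.zero_le c),
      ← ZMod.natCast_zmod_val j, ← Nat.cast_add_one, (by omega : j.val + 1 = n - c),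
      ZMod.natCast_self]

theorem arcProj_sub_one [NeZero n] (hc : c + 1 < n) : arcProj n (n - c) a c (a - 1) = -1 := by
  rw [sub_one_eq_add_natCast, arcProj_add_natCast a _ (by omega), if_neg (by omega),
    eq_neg_iff_add_eq_zero, ← Nat.cast_add_one, (by omega : n - 1 - c + 1 = n - c),
    ZMod.natCast_self]

theorem arcProj_add_succ (hc : c + 1 < n) :
    arcProj n (n - c) a c (a + ((c + 1 : ℕ) : ZMod n)) = 1 := by
  rw [arcProj_add_natCast a _ hc, if_neg (by omega), Nat.add_sub_cancel_left, Nat.cast_one]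

theorem arcLift_neg_one [NeZero n] [NeZero (n - c)] (hc : c + 2 ≤ n) :
    arcLift n c a (-1) = a - 1 := by
  have : Fact (1 < n - c) := ⟨by omega⟩
  rw [← arcProj_sub_one a (by omega)]
  exact arcLift_arcProj a (by rw [arcProj_sub_one a (by omega)]; simp)

theorem arcLift_one [NeZero n] [NeZero (n - c)] (hc : c + 2 ≤ n) :
    arcLift n c a 1 = a + ((c + 1 : ℕ) : ZMod n) := by
  have : Fact (1 < n - c) := ⟨by omega⟩
  rw [← arcProj_add_succ a (by omega)]
  exact arcLift_arcProj a (by rw [arcProj_add_succ a (by omega)]; simp)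

end ArcProj

def Dominates {V : Type*} (G : SimpleGraph V) (S : Set V) (v : V) : Prop :=
  v ∈ S ∨ ∃ u ∈ S, G.Adj u v

theorem Dominates.mono {V : Type*} {G : SimpleGraph V} {S T : Set V} {v : V}
    (h : Dominates G S v) (hST : S ⊆ T) : Dominates G T v :=
  h.imp (@hST v) fun ⟨u, hu, huv⟩ => ⟨u, hST hu, huv⟩

theorem domNum_le {V : Type*} {G : SimpleGraph V} {S : Set V} (hS : IsDominating G S) :
    domNum G ≤ S.ncard :=
  Nat.sInf_le ⟨S, hS, rfl⟩

theorem exists_isDominating_ncard_eq_domNum {V : Type*} (G : SimpleGraph V) :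
    ∃ S, IsDominating G S ∧ S.ncard = domNum G :=
  Nat.sInf_mem (s := {k | ∃ S : Set V, IsDominating G S ∧ S.ncard = k})
    ⟨_, Set.univ, fun _ => Or.inl trivial, rfl⟩

section ContractGraph

variable {V W : Type*} (G : SimpleGraph V) {p : V → W} {σ : W → V} {w₀ : W}

theorem contractGraph_adj_iff (hpσ : Function.LeftInverse p σ)
    (hσp : ∀ v, p v ≠ w₀ → σ (p v) = v) {x y : W} (hx : x ≠ w₀) (hy : y ≠ w₀) :
    (contractGraph G p).Adj x y ↔ G.Adj (σ x) (σ y) := by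
  constructor
  · rintro ⟨-, u, v, rfl, rfl, huv⟩
    rwa [hσp u hx, hσp v hy]
  · intro h
    exact ⟨fun hxy => h.ne (congrArg σ hxy), σ x, σ y, hpσ x, hpσ y, h⟩

theorem neighborSet_eq_image_of_not_adj (hpσ : Function.LeftInverse p σ)
    (hσp : ∀ v, p v ≠ w₀ → σ (p v) = v) {x : W} (hx : x ≠ w₀)
    (hx₀ : ¬ (contractGraph G p).Adj x w₀) :
    G.neighborSet (σ x) = σ '' (contractGraph G p).neighborSet x := by
  have hne : ∀ y, (contractGraph G p).Adj x y → y ≠ w₀ := fun y h hy => hx₀ (hy ▸ h)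
  ext v
  simp only [mem_neighborSet, Set.mem_image]
  constructor
  · intro h
    have hv : p v ≠ w₀ := fun hv =>
      hx₀ ⟨hx, σ x, v, hpσ x, hv, h⟩
    refine ⟨p v, ?_, hσp v hv⟩
    rwa [contractGraph_adj_iff G hpσ hσp hx hv, hσp v hv]
  · rintro ⟨y, hy, rfl⟩
    exact (contractGraph_adj_iff G hpσ hσp hx (hne y hy)).mp hy

theorem deg2_contractGraph_iff (hpσ : Function.LeftInverse p σ)
    (hσp : ∀ v, p v ≠ w₀ → σ (p v) = v) {x : W} (hx : x ≠ w₀)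
    (hx₀ : ¬ (contractGraph G p).Adj x w₀) :
    Deg2 (contractGraph G p) x ↔ Deg2 G (σ x) := by
  rw [Deg2, Deg2, neighborSet_eq_image_of_not_adj G hpσ hσp hx hx₀,
    Set.ncard_image_of_injective _ hpσ.injective]

theorem isDominating_contractGraph_of_ne (hpσ : Function.LeftInverse p σ)
    (hσp : ∀ v, p v ≠ w₀ → σ (p v) = v) {S : Set W}
    (hS : IsDominating (contractGraph G p) S) {v : V} (hv : p v ≠ w₀) :
    Dominates G (σ '' (S \ {w₀})) v ∨ (w₀ ∈ S ∧ (contractGraph G p).Adj w₀ (p v)) := by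
  rcases hS (p v) with hvS | ⟨u, huS, hu⟩
  · exact Or.inl (Or.inl ⟨p v, ⟨hvS, hv⟩, hσp v hv⟩)
  · by_cases hu₀ : u = w₀
    · exact Or.inr ⟨hu₀ ▸ huS, hu₀ ▸ hu⟩
    · refine Or.inl (Or.inr ⟨σ u, ⟨u, ⟨huS, hu₀⟩, rfl⟩, ?_⟩)
      rwa [← hσp v hv, ← contractGraph_adj_iff G hpσ hσp hu₀ hv]

end ContractGraph

theorem isDiagonal_natCast {m x y : ℕ} (hx : 0 < x) (hxy : x + 2 ≤ y) (hy : y < m) :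
    IsDiagonal m s((x : ZMod m), (y : ZMod m)) := by
  have hcast : ∀ {i j : ℕ}, i < m → j < m → i ≠ j → (i : ZMod m) ≠ j :=
    fun hi hj hij h => hij ((natCast_inj_of_lt hi hj).mp h)
  refine isDiagonal_mk_iff.mpr ⟨hcast (by omega) hy (by omega), ?_, ?_⟩
  · rw [← Nat.cast_add_one]; exact hcast (by omega) hy (by omega)
  · rw [← Nat.cast_add_one]
    rcases (by omega : y + 1 < m ∨ y + 1 = m) with h | h
    · exact hcast h (by omega) (by omega)
    · rw [h, ZMod.natCast_self, ← Nat.cast_zero]; exact hcast (by omega) (by omega) (by omega)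

noncomputable def contractDiags (n c : ℕ) (a : ZMod n) (D : Finset (Sym2 (ZMod n))) :
    Finset (Sym2 (ZMod (n - c))) :=
  (diagsIn n D (a + ((c + 1 : ℕ) : ZMod n)) (a - 1)).image (Sym2.map (arcProj n (n - c) a c))

section ContractSection

variable {n c : ℕ} {D : Finset (Sym2 (ZMod n))} {a : ZMod n}

theorem exists_adj_of_mog_contractDiags_adj [NeZero (n - c)] (hn : 1 < n)
    (hD : ∀ e ∈ D, IsDiagonal n e) {x y : ZMod (n - c)}
    (h : (mog (n - c) (contractDiags n c a D)).Adj x y) :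
    ∃ u v, arcProj n (n - c) a c u = x ∧ arcProj n (n - c) a c v = y ∧ (mog n D).Adj u v := by
  have : Fact (1 < n) := ⟨hn⟩
  obtain ⟨⟨i, hi⟩ | he', -⟩ := (mog_adj_iff _ x y).mp h
  · have hadj := mog_adj_of_eq_add_one D (rfl : arcLift n c a i + 1 = _)
    rcases Sym2.eq_iff.mp hi with ⟨rfl, rfl⟩ | ⟨rfl, rfl⟩
    · exact ⟨_, _, arcProj_arcLift a x, arcProj_arcLift_add_one a x, hadj⟩
    · exact ⟨_, _, arcProj_arcLift_add_one a y, arcProj_arcLift a y, hadj.symm⟩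
  · obtain ⟨e, he, hmap⟩ := Finset.mem_image.mp he'
    have heD := diagsIn_subset D _ _ he
    obtain ⟨u, v, rfl, -⟩ := hD e heD
    rcases Sym2.eq_iff.mp ((Sym2.map_mk _ u v).symm.trans hmap) with ⟨hu, hv⟩ | ⟨hu, hv⟩
    · exact ⟨u, v, hu, hv, mog_adj_of_mem hD heD⟩
    · exact ⟨v, u, hv, hu, (mog_adj_of_mem hD heD).symm⟩

variable [NeZero n]

theorem exists_of_mem_diagsIn_outer (hc : c + 2 ≤ n) (hdiag : ∀ e ∈ D, IsDiagonal n e)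
    {e : Sym2 (ZMod n)} (he : e ∈ diagsIn n D (a + ((c + 1 : ℕ) : ZMod n)) (a - 1)) :
    ∃ i j : ℕ, c + 1 ≤ i ∧ i + 2 ≤ j ∧ j < n ∧ s(a + i, a + j) = e := by
  rw [show a - 1 = a + ((c + 1 : ℕ) : ZMod n) + ((n - c - 2 : ℕ) : ZMod n) by
    rw [sub_one_eq_add_natCast, add_assoc, ← Nat.cast_add,
      (by omega : c + 1 + (n - c - 2) = n - 1)]]
    at he
  obtain ⟨i, j, hij, hj, rfl⟩ := exists_of_mem_diagsIn hdiag (by omega) he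
  refine ⟨c + 1 + i, c + 1 + j, by omega, by omega, by omega, ?_⟩
  simp only [Nat.cast_add, add_assoc]

theorem arcProj_ne_zero_of_mem_outer [NeZero (n - c)] (hc : c + 2 ≤ n) {x : ZMod n}
    (hx : x ∈ sectVerts n (a + ((c + 1 : ℕ) : ZMod n)) (a - 1)) :
    arcProj n (n - c) a c x ≠ 0 := by
  obtain ⟨k, hk, rfl⟩ := exists_eq_add_natCast a x
  rw [sub_one_eq_add_natCast, add_natCast_mem_sectVerts_add_natCast_iff a (by omega) (by omega) hk]
    at hx
  rw [ne_eq, arcProj_eq_zero_iff, val_add_natCast_sub_self a hk]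
  omega

theorem arcProj_of_mem_inner [NeZero (n - c)] (hc : c + 2 ≤ n) {x : ZMod n}
    (hx : x ∈ sectVerts n (a - 1) (a + ((c + 1 : ℕ) : ZMod n))) :
    arcProj n (n - c) a c x = 0 ∨ (x ∈ sectVerts n (a + ((c + 1 : ℕ) : ZMod n)) (a - 1) ∧
      (arcProj n (n - c) a c x = 1 ∨ arcProj n (n - c) a c x = -1)) := by
  obtain ⟨k, hk, rfl⟩ := exists_eq_add_natCast a x
  rw [sub_one_eq_add_natCast, add_natCast_mem_sectVerts_add_natCast_iff a (by omega) (by omega) hk]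
    at hx
  rcases (by omega : k ≤ c ∨ k = c + 1 ∨ k = n - 1) with h | rfl | rfl
  · left
    rw [arcProj_eq_zero_iff, val_add_natCast_sub_self a hk]
    exact h
  · exact Or.inr ⟨left_mem_sectVerts _ _, Or.inl (arcProj_add_succ a (by omega))⟩
  · rw [← sub_one_eq_add_natCast]
    exact Or.inr ⟨right_mem_sectVerts _ _, Or.inr (arcProj_sub_one a (by omega))⟩

theorem arcLift_arcProj_of_mem_outer [NeZero (n - c)] (hc : c + 2 ≤ n) {e : Sym2 (ZMod n)}
    (he : e ∈ diagsIn n D (a + ((c + 1 : ℕ) : ZMod n)) (a - 1)) :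
    Sym2.map (arcLift n c a) (Sym2.map (arcProj n (n - c) a c) e) = e := by
  rw [Sym2.map_map]
  refine (Sym2.map_congr fun x hx => ?_).trans (congrFun Sym2.map_id e)
  exact arcLift_arcProj a (arcProj_ne_zero_of_mem_outer hc ((mem_diagsIn_iff.mp he).2 x hx))

theorem map_arcProj_of_mem_outer (hc : c + 2 ≤ n) (hdiag : ∀ e ∈ D, IsDiagonal n e)
    {e : Sym2 (ZMod n)} (he : e ∈ diagsIn n D (a + ((c + 1 : ℕ) : ZMod n)) (a - 1)) :
    ∃ i j : ℕ, c + 1 ≤ i ∧ i + 2 ≤ j ∧ j < n ∧ s(a + i, a + j) = e ∧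
      Sym2.map (arcProj n (n - c) a c) e =
        s(((i - c : ℕ) : ZMod (n - c)), ((j - c : ℕ) : ZMod (n - c))) := by
  obtain ⟨i, j, hi, hij, hj, rfl⟩ := exists_of_mem_diagsIn_outer hc hdiag he
  refine ⟨i, j, hi, hij, hj, rfl, ?_⟩
  rw [Sym2.map_mk, arcProj_add_natCast a _ (by omega), arcProj_add_natCast a _ hj,
    if_neg (by omega), if_neg (by omega)]

theorem isTriangulation_contractDiags [NeZero (n - c)] (hc : c + 4 ≤ n)
    (hD : IsTriangulation n D) (hspan : s(a - 1, a + ((c + 1 : ℕ) : ZMod n)) ∈ D) :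
    IsTriangulation (n - c) (contractDiags n c a D) := by
  have hout : ∀ e' ∈ contractDiags n c a D,
      ∃ i j : ℕ, c + 1 ≤ i ∧ i + 2 ≤ j ∧ j < n ∧
      s(a + i, a + j) ∈ D ∧ e' = s(((i - c : ℕ) : ZMod (n - c)), ((j - c : ℕ) : _)) := by
    intro e' he'
    obtain ⟨e, he, rfl⟩ := Finset.mem_image.mp he'
    obtain ⟨i, j, hi, hij, hj, rfl, hmap⟩ := map_arcProj_of_mem_outer (by omega) hD.1 he
    exact ⟨i, j, hi, hij, hj, (mem_diagsIn_iff.mp he).1, hmap⟩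
  refine ⟨fun e' he' => ?_, fun e' he' f' hf' hcr => ?_, ?_⟩
  · obtain ⟨i, j, hi, hij, hj, -, rfl⟩ := hout e' he'
    exact isDiagonal_natCast (by omega) (by omega) (by omega)
  · obtain ⟨i, j, hi, hij, hj, he, rfl⟩ := hout e' he'
    obtain ⟨k, l, hk, hkl, hl, hf, rfl⟩ := hout f' hf'
    have := lt_of_crosses (0 : ZMod (n - c)) (by omega : i - c < j - c) (by omega : k - c < l - c)
      (by omega) (by omega) (by simpa only [zero_add] using hcr)
    rcases (by omega : (i < k ∧ k < j ∧ j < l) ∨ (k < i ∧ i < l ∧ l < j)) with h | h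
    · exact hD.2.1 _ he _ hf (crosses_of_lt a h.1 h.2.1 h.2.2 hl)
    · exact hD.2.1 _ hf _ he (crosses_of_lt a h.1 h.2.1 h.2.2 hj)
  · have hinj : Set.InjOn (Sym2.map (arcProj n (n - c) a c))
        (diagsIn n D (a + ((c + 1 : ℕ) : ZMod n)) (a - 1)) :=
      Set.LeftInvOn.injOn fun e he => arcLift_arcProj_of_mem_outer (by omega) he
    rw [contractDiags, Finset.card_image_of_injOn hinj, card_diagsIn hD (Sym2.eq_swap ▸ hspan),
      sub_one_eq_add_natCast, val_add_natCast_sub a (by omega) (by omega), if_pos (by omega)]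
    omega

theorem mog_contractDiags_adj_of_adj [NeZero (n - c)] (hc : c + 4 ≤ n) (hD : IsTriangulation n D)
    (hspan : s(a - 1, a + ((c + 1 : ℕ) : ZMod n)) ∈ D) {u v : ZMod n} (huv : (mog n D).Adj u v)
    (hne : arcProj n (n - c) a c u ≠ arcProj n (n - c) a c v) :
    (mog (n - c) (contractDiags n c a D)).Adj (arcProj n (n - c) a c u)
      (arcProj n (n - c) a c v) := by
  have hbd : ∀ {x y : ZMod (n - c)}, x = 0 → (y = 1 ∨ y = -1) →
      (∃ i, s(x, y) = s(i, i + 1)) ∧ ∃ i, s(y, x) = s(i, i + 1) := by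
    rintro x y rfl (rfl | rfl)
    · exact ⟨⟨0, by rw [zero_add]⟩, ⟨0, by rw [zero_add, Sym2.eq_swap]⟩⟩
    · exact ⟨⟨-1, by rw [neg_add_cancel, Sym2.eq_swap]⟩, ⟨-1, by rw [neg_add_cancel]⟩⟩
  refine (mog_adj_iff _ _ _).mpr ⟨?_, hne⟩
  obtain ⟨⟨i, hi⟩ | he, -⟩ := (mog_adj_iff D u v).mp huv
  · left
    rcases Sym2.eq_iff.mp hi with ⟨rfl, rfl⟩ | ⟨rfl, rfl⟩
    · rcases arcProj_add_one (c := c) a u with h | h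
      · exact absurd h.symm hne
      · exact ⟨_, by rw [h]⟩
    · rcases arcProj_add_one (c := c) a v with h | h
      · exact absurd h hne
      · exact ⟨_, by rw [h, Sym2.eq_swap]⟩
  rcases mem_diagsIn_or_mem_diagsIn hD.1 hD.2.1 hspan he with hin | hout
  · obtain ⟨-, hu, hv⟩ := mem_diagsIn_mk_iff.mp hin
    rcases arcProj_of_mem_inner (by omega) hu with hu | ⟨hu, hu'⟩ <;>
    rcases arcProj_of_mem_inner (by omega) hv with hv | ⟨hv, hv'⟩
    · exact absurd (hu.trans hv.symm) hne
    · exact Or.inl (hbd hu hv').1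
    · exact Or.inl (hbd hv hu').2
    · exact Or.inr (Finset.mem_image_of_mem _ (mem_diagsIn_mk_iff.mpr ⟨he, hu, hv⟩))
  · exact Or.inr (Finset.mem_image_of_mem _ hout)

theorem contractGraph_mog_eq [NeZero (n - c)] (hc : c + 4 ≤ n) (hD : IsTriangulation n D)
    (hspan : s(a - 1, a + ((c + 1 : ℕ) : ZMod n)) ∈ D) :
    contractGraph (mog n D) (arcProj n (n - c) a c) = mog (n - c) (contractDiags n c a D) := by
  ext x y
  constructor
  · rintro ⟨hxy, u, v, rfl, rfl, huv⟩
    exact mog_contractDiags_adj_of_adj hc hD hspan huv hxy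
  · exact fun h => ⟨h.ne, exists_adj_of_mog_contractDiags_adj (by omega) hD.1 h⟩

theorem neighborSet_mog_contractDiags_zero [NeZero (n - c)] (hc : c + 4 ≤ n) :
    (mog (n - c) (contractDiags n c a D)).neighborSet 0 = {1, -1} := by
  have : Fact (1 < n - c) := ⟨by omega⟩
  ext y
  simp only [mem_neighborSet, Set.mem_insert_iff, Set.mem_singleton_iff, mog_adj_iff]
  constructor
  · rintro ⟨⟨i, hi⟩ | he, -⟩
    · rcases Sym2.eq_iff.mp hi with ⟨rfl, rfl⟩ | ⟨h0, rfl⟩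
      · exact Or.inl (zero_add 1)
      · exact Or.inr (eq_neg_of_add_eq_zero_left h0.symm)
    · obtain ⟨e, he, hmap⟩ := Finset.mem_image.mp he
      obtain ⟨x, hx, hx0⟩ := Sym2.mem_map.mp (hmap ▸ Sym2.mem_mk_left 0 y)
      exact absurd hx0
        (arcProj_ne_zero_of_mem_outer (by omega) ((mem_diagsIn_iff.mp he).2 x hx))
  · rintro (rfl | rfl)
    · exact ⟨Or.inl ⟨0, by rw [zero_add]⟩, zero_ne_one⟩
    · exact ⟨Or.inl ⟨-1, by rw [neg_add_cancel, Sym2.eq_swap]⟩, by simp⟩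

theorem deg2_mog_contractDiags_zero [NeZero (n - c)] (hc : c + 4 ≤ n) :
    Deg2 (mog (n - c) (contractDiags n c a D)) 0 := by
  have : Fact (2 < n - c) := ⟨by omega⟩
  rw [Deg2, neighborSet_mog_contractDiags_zero hc, Set.ncard_pair ZMod.neg_one_ne_one.symm]

theorem deg2_mog_contractDiags_iff [NeZero (n - c)] (hc : c + 4 ≤ n) (hD : IsTriangulation n D)
    (hspan : s(a - 1, a + ((c + 1 : ℕ) : ZMod n)) ∈ D) {j : ZMod (n - c)} (hj : j ≠ 0) :
    Deg2 (mog (n - c) (contractDiags n c a D)) j ↔ Deg2 (mog n D) (arcLift n c a j) := by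
  have : Fact (1 < n - c) := ⟨by omega⟩
  by_cases hj1 : j = -1 ∨ j = 1
  · have hspan' : s(-1, 1) ∈ contractDiags n c a D := by
      refine Finset.mem_image.mpr ⟨_, mem_diagsIn_mk_iff.mpr
        ⟨hspan, right_mem_sectVerts _ _, left_mem_sectVerts _ _⟩, ?_⟩
      rw [Sym2.map_mk, arcProj_sub_one a (by omega), arcProj_add_succ a (by omega)]
    have hT' := isTriangulation_contractDiags hc hD hspan
    refine iff_of_false ?_ ?_ <;> rcases hj1 with rfl | rfl
    · exact not_deg2_of_mem (by omega) hT'.1 hspan'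
    · exact not_deg2_of_mem (by omega) hT'.1 (Sym2.eq_swap ▸ hspan')
    · rw [arcLift_neg_one a (by omega)]
      exact not_deg2_of_mem (by omega) hD.1 hspan
    · rw [arcLift_one a (by omega)]
      exact not_deg2_of_mem (by omega) hD.1 (Sym2.eq_swap ▸ hspan)
  · have hG := contractGraph_mog_eq hc hD hspan
    rw [← hG]
    refine deg2_contractGraph_iff _ (arcProj_arcLift a) (fun v hv => arcLift_arcProj a hv) hj ?_
    rw [hG, adj_comm, ← mem_neighborSet, neighborSet_mog_contractDiags_zero hc]
    simpa [or_comm] using hj1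

theorem domNum_le_of_dominates [NeZero (n - c)] (hc : c + 4 ≤ n) (hD : IsTriangulation n D)
    (hspan : s(a - 1, a + ((c + 1 : ℕ) : ZMod n)) ∈ D) {S : Set (ZMod (n - c))}
    (hS : IsDominating (mog (n - c) (contractDiags n c a D)) S) (X : Set (ZMod n))
    (hX : ∀ v, arcProj n (n - c) a c v = 0 →
      Dominates (mog n D) (arcLift n c a '' (S \ {0}) ∪ X) v)
    (hX₀ : 0 ∈ S → Dominates (mog n D) (arcLift n c a '' (S \ {0}) ∪ X) (a - 1) ∧
      Dominates (mog n D) (arcLift n c a '' (S \ {0}) ∪ X) (a + ((c + 1 : ℕ) : ZMod n))) :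
    domNum (mog n D) ≤ (arcLift n c a '' (S \ {0})).ncard + X.ncard := by
  have : Fact (1 < n - c) := ⟨by omega⟩
  have hG := contractGraph_mog_eq hc hD hspan
  refine (domNum_le fun v => ?_).trans (Set.ncard_union_le _ X)
  by_cases hv : arcProj n (n - c) a c v = 0
  · exact hX v hv
  rcases isDominating_contractGraph_of_ne _ (arcProj_arcLift a) (fun v hv => arcLift_arcProj a hv)
    (hG ▸ hS) hv with h | ⟨h0, h⟩
  · exact h.mono Set.subset_union_left
  rw [hG, ← mem_neighborSet, neighborSet_mog_contractDiags_zero hc] at h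
  rcases h with h | h
  · rw [← arcProj_add_succ a (by omega)] at h
    rw [← arcLift_arcProj a hv, h, arcLift_arcProj a (h ▸ hv)]
    exact (hX₀ h0).2
  · rw [Set.mem_singleton_iff, ← arcProj_sub_one a (by omega)] at h
    rw [← arcLift_arcProj a hv, h, arcLift_arcProj a (h ▸ hv)]
    exact (hX₀ h0).1

end ContractSection

section EssentialPairs

variable {n c : ℕ} {G : SimpleGraph (ZMod n)} {G' : SimpleGraph (ZMod (n - c))} {a : ZMod n}

theorem arcLift_add_natCast [NeZero (n - c)] (j : ZMod (n - c)) {t : ℕ} (ht : j.val + t < n - c) :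
    arcLift n c a j + t = arcLift n c a (j + t) ∧ (j + (t : ZMod (n - c))).val = j.val + t := by
  have hval : (j + (t : ZMod (n - c))).val = j.val + t := by
    rw [ZMod.val_add_of_lt] <;> rw [ZMod.val_natCast_of_lt (by omega)]; omega
  refine ⟨?_, hval⟩
  rw [arcLift, arcLift, hval, add_assoc, ← Nat.cast_add, add_assoc]

theorem essential_arcLift [NeZero n] [NeZero (n - c)] (h0 : Deg2 G' 0)
    (hdeg : ∀ j ≠ 0, Deg2 G' j ↔ Deg2 G (arcLift n c a j))
    (ha : Deg2 G a) (hac : Deg2 G (a + c)) {x y : ZMod (n - c)}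
    (hxy : Essential (n - c) G' x y) :
    Essential n G (arcLift n c a x) (arcLift n c a x + ((y - x).val : ZMod n)) := by
  obtain ⟨hx, hy, hint, hL⟩ := hxy
  have hLlt := ZMod.val_lt (y - x)
  have hxlt := ZMod.val_lt x
  have hcn : c < n := Nat.lt_of_sub_ne_zero (NeZero.ne (n - c))
  -- The contracted vertex has degree 2, so it is not inside the arc from `x` to `y`.
  have hwrap : x.val + (y - x).val ≤ n - c := by
    by_contra h
    have hx0 : x ≠ 0 := by rintro rfl; simp only [ZMod.val_zero, sub_zero] at h hLlt; omega
    refine hint 0 ⟨?_, ?_⟩ h0 <;> rw [zero_sub, ZMod.neg_val, if_neg hx0] <;> omega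
  have hLval : (arcLift n c a x + ((y - x).val : ZMod n) - arcLift n c a x).val = (y - x).val := by
    rw [add_sub_cancel_left, ZMod.val_natCast_of_lt (by omega)]
  refine ⟨?_, ?_, fun w hw hdw => ?_, by rw [hLval]; exact hL⟩
  · by_cases hx0 : x = 0
    · rwa [hx0, arcLift, ZMod.val_zero, add_zero]
    · exact (hdeg x hx0).mp hx
  · rcases hwrap.lt_or_eq with hlt | heq
    · obtain ⟨hσ, hval⟩ := arcLift_add_natCast (a := a) x hlt
      rw [hσ, ZMod.natCast_zmod_val, add_sub_cancel]
      rw [ZMod.natCast_zmod_val, add_sub_cancel] at hval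
      refine (hdeg y fun h => ?_).mp hy
      have := congrArg ZMod.val h
      rw [ZMod.val_zero] at this
      omega
    · rwa [arcLift, add_assoc, ← Nat.cast_add, (by omega : c + x.val + (y - x).val = n),
        ZMod.natCast_self, add_zero]
  · obtain ⟨ht0, htL⟩ := hw
    rw [hLval] at htL
    set t := (w - arcLift n c a x).val
    obtain ⟨hσ, hval⟩ := arcLift_add_natCast (a := a) x (t := t) (by omega)
    have hw : w = arcLift n c a (x + t) := by
      rw [← hσ, ZMod.natCast_zmod_val, add_sub_cancel]
    have hz0 : x + (t : ZMod (n - c)) ≠ 0 := fun h => by rw [h, ZMod.val_zero] at hval; omega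
    have hzx : (x + (t : ZMod (n - c)) - x).val = t := by
      rw [add_sub_cancel_left, ZMod.val_natCast_of_lt (by omega)]
    exact hint (x + t) ⟨by rw [hzx]; omega, by rw [hzx]; omega⟩ ((hdeg _ hz0).mpr (hw ▸ hdw))

theorem numEssential_add_one_le [NeZero n] [NeZero (n - c)] (hc : 3 ≤ c) (h0 : Deg2 G' 0)
    (hdeg : ∀ j ≠ 0, Deg2 G' j ↔ Deg2 G (arcLift n c a j))
    (ha : Deg2 G a) (hac : Deg2 G (a + c))
    (hblock : ∀ t : ℕ, 0 < t → t < c → ¬ Deg2 G (a + t)) :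
    numEssential (n - c) G' + 1 ≤ numEssential n G := by
  have hcn : c < n := Nat.lt_of_sub_ne_zero (NeZero.ne (n - c))
  let F : ZMod (n - c) × ZMod (n - c) → ZMod n × ZMod n := fun q =>
    (arcLift n c a q.1, arcLift n c a q.1 + ((q.2 - q.1).val : ZMod n))
  have hF : Function.Injective F := by
    rintro ⟨x, y⟩ ⟨x', y'⟩ h
    simp only [F, Prod.mk.injEq] at h
    obtain ⟨h1, h2⟩ := h
    obtain rfl := arcLift_injective a h1
    have := ZMod.val_lt (y - x)
    have := ZMod.val_lt (y' - x)
    rw [add_natCast_inj _ (by omega) (by omega)] at h2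
    simpa using ZMod.val_injective _ h2
  have hca : (a + (c : ZMod n) - a).val = c := by
    rw [add_sub_cancel_left, ZMod.val_natCast_of_lt hcn]
  have hess : Essential n G a (a + c) := by
    refine ⟨ha, hac, fun w ⟨hw0, hwc⟩ => ?_, by rw [hca]; exact hc⟩
    rw [hca] at hwc
    rw [← add_sub_cancel a w, ← ZMod.natCast_zmod_val (w - a)]
    exact hblock _ hw0 hwc
  have hnot : (a, a + (c : ZMod n)) ∉ F '' {q | Essential (n - c) G' q.1 q.2} := by
    rintro ⟨q, -, hq⟩
    have := congrArg ZMod.val (add_eq_left.mp (congrArg Prod.fst hq))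
    rw [ZMod.val_natCast_of_lt (by have := ZMod.val_lt q.1; omega), ZMod.val_zero] at this
    omega
  calc numEssential (n - c) G' + 1
      = (insert (a, a + (c : ZMod n)) (F '' {q | Essential (n - c) G' q.1 q.2})).ncard := by
        rw [Set.ncard_insert_of_notMem hnot, Set.ncard_image_of_injective _ hF, numEssential]
    _ ≤ numEssential n G := by
        refine Set.ncard_le_ncard (Set.insert_subset hess ?_)
        rintro _ ⟨q, hq, rfl⟩
        exact essential_arcLift h0 hdeg ha hac hq

end EssentialPairs

section TriangleWithTwoEars

variable {n : ℕ} {D : Finset (Sym2 (ZMod n))} {r : ZMod n}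

theorem span_mem_of_mem (h3 : s(r, r + 5) ∈ D) :
    s(r + 1 - 1, r + 1 + ((3 + 1 : ℕ) : ZMod n)) ∈ D := by
  convert h3 using 2 <;> push_cast <;> ring

theorem arcProj_add_five (hn : 5 ≤ n) : arcProj n (n - 3) (r + 1) 3 (r + 5) = 1 := by
  have := arcProj_add_succ (c := 3) (r + 1) (by omega)
  rwa [show r + 1 + ((3 + 1 : ℕ) : ZMod n) = r + 5 by push_cast; ring] at this

theorem dominates_of_add_two_mem (hn : 1 < n) (hD : IsTriangulation n D) (h1 : s(r, r + 2) ∈ D)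
    (h2 : s(r + 2, r + 5) ∈ D) {Y : Set (ZMod n)} (hY : r + 2 ∈ Y) {v : ZMod n}
    (hv : v = r ∨ v = r + 1 ∨ v = r + 3 ∨ v = r + 5) : Dominates (mog n D) Y v := by
  have : Fact (1 < n) := ⟨hn⟩
  rcases hv with rfl | rfl | rfl | rfl
  exacts [Or.inr ⟨_, hY, (mog_adj_of_mem hD.1 h1).symm⟩,
    Or.inr ⟨_, hY, (mog_adj_of_eq_add_one D (by ring)).symm⟩,
    Or.inr ⟨_, hY, mog_adj_of_eq_add_one D (by ring)⟩,
    Or.inr ⟨_, hY, mog_adj_of_mem hD.1 h2⟩]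

variable [NeZero n]

/-- `G[r, r + 5]` carries `4` diagonals (`card_diagsIn`), none of them at the degree-2 vertices
`r + 1`, `r + 4`; if none were at `r + 3` either, only three pairs would be left. -/
theorem not_deg2_add_three (hn : 7 ≤ n) (hD : IsTriangulation n D) (h3 : s(r, r + 5) ∈ D)
    (hd1 : Deg2 (mog n D) (r + 1))
    (hd4 : Deg2 (mog n D) (r + 4)) : ¬ Deg2 (mog n D) (r + 3) := by
  intro hd3
  have hsub : diagsIn n D r (r + 5) ⊆ {s(r, r + 2), s(r + 2, r + 5), s(r, r + 5)} := by
    intro e he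
    obtain ⟨i, j, hij, hj, rfl⟩ := exists_of_mem_diagsIn hD.1 (M := 5) (by omega)
      (by simpa using he)
    have heD := (mem_diagsIn_iff.mp he).1
    have hend : ∀ k : ℕ, (k = i ∨ k = j) → k = 0 ∨ k = 2 ∨ k = 5 := by
      intro k hk
      obtain ⟨x, hx⟩ : ∃ x, s(r + (k : ZMod n), x) ∈ D := by
        rcases hk with rfl | rfl
        exacts [⟨_, heD⟩, ⟨_, Sym2.eq_swap ▸ heD⟩]
      have hndeg := not_deg2_of_mem (by omega) hD.1 hx
      rcases (by omega : k = 0 ∨ k = 1 ∨ k = 2 ∨ k = 3 ∨ k = 4 ∨ k = 5) with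
        rfl | rfl | rfl | rfl | rfl | rfl <;> simp_all
    rcases hend i (Or.inl rfl), hend j (Or.inr rfl) with ⟨hi | hi | hi, hj | hj | hj⟩ <;>
      subst hi hj <;> first | omega | simp
  have := Finset.card_le_card hsub
  rw [card_diagsIn hD h3, add_sub_cancel_left] at this
  have := this.trans Finset.card_le_three
  rw [show (5 : ZMod n) = ((5 : ℕ) : ZMod n) by simp, ZMod.val_natCast_of_lt (by omega)] at this
  omega

theorem arcProj_self (hn : 5 ≤ n) : arcProj n (n - 3) (r + 1) 3 r = -1 := by
  have := arcProj_sub_one (c := 3) (r + 1) (by omega)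
  rwa [add_sub_cancel_right] at this

theorem eq_of_arcProj_eq_zero [NeZero (n - 3)] {v : ZMod n}
    (hv : arcProj n (n - 3) (r + 1) 3 v = 0) :
    v = r + 1 ∨ v = r + 2 ∨ v = r + 3 ∨ v = r + 4 := by
  obtain ⟨k, hk, rfl⟩ := exists_eq_add_natCast (r + 1) v
  rw [arcProj_eq_zero_iff, val_add_natCast_sub_self _ hk] at hv
  interval_cases k
  exacts [Or.inl (by simp), Or.inr (Or.inl (by push_cast; ring)),
    Or.inr (Or.inr (Or.inl (by push_cast; ring))), Or.inr (Or.inr (Or.inr (by push_cast; ring)))]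

theorem domNum_le_of_dominates_block [NeZero (n - 3)] (hn : 7 ≤ n) (hD : IsTriangulation n D)
    (h3 : s(r, r + 5) ∈ D) {S : Set (ZMod (n - 3))}
    (hS : IsDominating (mog (n - 3) (contractDiags n 3 (r + 1) D)) S) (X : Set (ZMod n))
    (hX : ∀ k ∈ ({1, 2, 3, 4} : Set (ZMod n)),
      Dominates (mog n D) (arcLift n 3 (r + 1) '' (S \ {0}) ∪ X) (r + k))
    (hX₀ : 0 ∈ S → Dominates (mog n D) (arcLift n 3 (r + 1) '' (S \ {0}) ∪ X) r ∧
      Dominates (mog n D) (arcLift n 3 (r + 1) '' (S \ {0}) ∪ X) (r + 5)) :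
    domNum (mog n D) ≤ (arcLift n 3 (r + 1) '' (S \ {0})).ncard + X.ncard := by
  refine domNum_le_of_dominates (by omega) hD (span_mem_of_mem h3) hS X (fun v hv => ?_) ?_
  · rcases eq_of_arcProj_eq_zero hv with rfl | rfl | rfl | rfl
    exacts [hX 1 (by simp), hX 2 (by simp), hX 3 (by simp), hX 4 (by simp)]
  · rwa [add_sub_cancel_right, show r + 1 + ((3 + 1 : ℕ) : ZMod n) = r + 5 by push_cast; ring]

theorem domNum_le_of_zero_mem [NeZero (n - 3)] (hn : 7 ≤ n) (hD : IsTriangulation n D)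
    (h1 : s(r, r + 2) ∈ D) (h2 : s(r + 2, r + 5) ∈ D) (h3 : s(r, r + 5) ∈ D)
    {S : Set (ZMod (n - 3))} (hS : IsDominating (mog (n - 3) (contractDiags n 3 (r + 1) D)) S)
    (h0 : 0 ∈ S) : domNum (mog n D) ≤ S.ncard + 1 := by
  have hdom : ∀ {v}, (v = r ∨ v = r + 1 ∨ v = r + 3 ∨ v = r + 5) →
      Dominates (mog n D) (arcLift n 3 (r + 1) '' (S \ {0}) ∪ {r + 2, r + 4}) v :=
    dominates_of_add_two_mem (by omega) hD h1 h2 (Or.inr (Or.inl rfl))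
  have := domNum_le_of_dominates_block hn hD h3 hS {r + 2, r + 4}
    (by
      rintro k (rfl | rfl | rfl | rfl)
      exacts [hdom (Or.inr (Or.inl rfl)), Or.inl (Or.inr (Or.inl rfl)),
        hdom (Or.inr (Or.inr (Or.inl rfl))), Or.inl (Or.inr (Or.inr rfl))])
    (fun _ => ⟨hdom (Or.inl rfl), hdom (Or.inr (Or.inr (Or.inr rfl)))⟩)
  have := Set.ncard_image_le (f := arcLift n 3 (r + 1)) (Set.toFinite (S \ {0}))
  have := Set.ncard_sdiff_singleton_of_mem h0
  have := (Set.ncard_pos (Set.toFinite S)).mpr ⟨_, h0⟩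
  have : ({r + 2, r + 4} : Set (ZMod n)).ncard ≤ 2 :=
    (Set.ncard_insert_le _ _).trans (by rw [Set.ncard_singleton])
  omega

theorem domNum_le_of_zero_not_mem [NeZero (n - 3)] (hn : 7 ≤ n) (hD : IsTriangulation n D)
    (h1 : s(r, r + 2) ∈ D) (h2 : s(r + 2, r + 5) ∈ D) (h3 : s(r, r + 5) ∈ D)
    {S : Set (ZMod (n - 3))} (hS : IsDominating (mog (n - 3) (contractDiags n 3 (r + 1) D)) S)
    (h0 : 0 ∉ S) : domNum (mog n D) ≤ S.ncard + 1 := by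
  have : Fact (1 < n) := ⟨by omega⟩
  have hadj : ∀ u v, v = u + 1 → (mog n D).Adj u v := fun u v h => mog_adj_of_eq_add_one D h
  have := Set.ncard_image_le (f := arcLift n 3 (r + 1)) (Set.toFinite (S \ {0}))
  have := Set.ncard_le_ncard (Set.sdiff_subset : S \ {0} ⊆ S)
  obtain ⟨u, huS, hu⟩ := (hS 0).resolve_left h0
  rw [adj_comm, ← mem_neighborSet, neighborSet_mog_contractDiags_zero (by omega)] at hu
  have hσT : arcLift n 3 (r + 1) u ∈ arcLift n 3 (r + 1) '' (S \ {0}) :=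
    ⟨u, ⟨huS, fun h => h0 (Set.mem_singleton_iff.mp h ▸ huS)⟩, rfl⟩
  rcases hu with rfl | hu
  · rw [arcLift_one (c := 3) (a := r + 1) (by omega),
      show r + 1 + ((3 + 1 : ℕ) : ZMod n) = r + 5 by push_cast; ring] at hσT
    have hdom : ∀ {v}, (v = r ∨ v = r + 1 ∨ v = r + 3 ∨ v = r + 5) →
        Dominates (mog n D) (arcLift n 3 (r + 1) '' (S \ {0}) ∪ {r + 2}) v :=
      dominates_of_add_two_mem (by omega) hD h1 h2 (Or.inr rfl)
    have := domNum_le_of_dominates_block hn hD h3 hS {r + 2}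
      (by
        rintro k (rfl | rfl | rfl | rfl)
        exacts [hdom (Or.inr (Or.inl rfl)), Or.inl (Or.inr rfl),
          hdom (Or.inr (Or.inr (Or.inl rfl))),
          Or.inr ⟨_, Or.inl hσT, (hadj _ _ (by ring)).symm⟩])
      (absurd · h0)
    rw [Set.ncard_singleton] at this
    omega
  · rw [Set.mem_singleton_iff.mp hu, arcLift_neg_one (c := 3) (a := r + 1) (by omega),
      add_sub_cancel_right] at hσT
    have := domNum_le_of_dominates_block hn hD h3 hS {r + 3}
      (by
        rintro k (rfl | rfl | rfl | rfl)
        exacts [Or.inr ⟨_, Or.inl hσT, hadj _ _ rfl⟩,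
          Or.inr ⟨_, Or.inl hσT, mog_adj_of_mem hD.1 h1⟩, Or.inl (Or.inr rfl),
          Or.inr ⟨_, Or.inr rfl, hadj _ _ (by ring)⟩])
      (absurd · h0)
    rw [Set.ncard_singleton] at this
    omega

theorem domNum_le_domNum_contract_add_one (hn : 7 ≤ n) (hD : IsTriangulation n D)
    (h1 : s(r, r + 2) ∈ D) (h2 : s(r + 2, r + 5) ∈ D) (h3 : s(r, r + 5) ∈ D) :
    domNum (mog n D) ≤ domNum (mog (n - 3) (contractDiags n 3 (r + 1) D)) + 1 := by
  have : NeZero (n - 3) := ⟨by omega⟩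
  obtain ⟨S, hS, hcard⟩ := exists_isDominating_ncard_eq_domNum
    (mog (n - 3) (contractDiags n 3 (r + 1) D))
  rw [← hcard]
  by_cases h0 : (0 : ZMod (n - 3)) ∈ S
  exacts [domNum_le_of_zero_mem hn hD h1 h2 h3 hS h0,
    domNum_le_of_zero_not_mem hn hD h1 h2 h3 hS h0]

end TriangleWithTwoEars

/-- Claim 2, second case. If the diagonals `{v_r, v_{r+2}}`,
`{v_{r+2}, v_{r+5}}` and `{v_r, v_{r+5}}` all lie in `D` and both `v_{r+1}` and `v_{r+4}`
have degree 2 in `G`, then contracting the four vertices `v_{r+1}, …, v_{r+4}` to a single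
new vertex `x` (realized via the projection collapsing that arc to `0 ∈ ℤ/(n-3)ℤ`) yields
a maximal outerplane graph `G'` on `n - 3` vertices in which `x` has degree 2 and is
adjacent to (the images of) `v_r` and `v_{r+5}`, with `k(G') ≤ k(G) - 1` and
`γ(G) ≤ γ(G') + 1`. -/
theorem statement9 (n : ℕ) (hn : 7 ≤ n) (D : Finset (Sym2 (ZMod n)))
    (hD : IsTriangulation n D) (r : ZMod n)
    (h1 : s(r, r + 2) ∈ D) (h2 : s(r + 2, r + 5) ∈ D) (h3 : s(r, r + 5) ∈ D)
    (hd1 : Deg2 (mog n D) (r + 1)) (hd4 : Deg2 (mog n D) (r + 4)) :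
    ∃ D' : Finset (Sym2 (ZMod (n - 3))),
      IsTriangulation (n - 3) D' ∧
      contractGraph (mog n D) (arcProj n (n - 3) (r + 1) 3) = mog (n - 3) D' ∧
      Deg2 (mog (n - 3) D') (0 : ZMod (n - 3)) ∧
      (mog (n - 3) D').Adj 0 (arcProj n (n - 3) (r + 1) 3 r) ∧
      (mog (n - 3) D').Adj 0 (arcProj n (n - 3) (r + 1) 3 (r + 5)) ∧
      numEssential (n - 3) (mog (n - 3) D') + 1 ≤ numEssential n (mog n D) ∧
      domNum (mog n D) ≤ domNum (mog (n - 3) D') + 1 := by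
  have : NeZero n := ⟨by omega⟩
  have : NeZero (n - 3) := ⟨by omega⟩
  have hspan := span_mem_of_mem h3
  have hnbr : (mog (n - 3) (contractDiags n 3 (r + 1) D)).neighborSet 0 = {1, -1} :=
    neighborSet_mog_contractDiags_zero (by omega)
  have hblock : ∀ t : ℕ, 0 < t → t < 3 → ¬ Deg2 (mog n D) (r + 1 + t) := by
    intro t ht0 ht3
    rcases (by omega : t = 1 ∨ t = 2) with rfl | rfl
    · rw [Nat.cast_one, add_assoc, one_add_one_eq_two]
      exact not_deg2_of_mem (by omega) hD.1 (Sym2.eq_swap ▸ h1)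
    · rw [show r + 1 + ((2 : ℕ) : ZMod n) = r + 3 by push_cast; ring]
      exact not_deg2_add_three hn hD h3 hd1 hd4
  refine ⟨contractDiags n 3 (r + 1) D, isTriangulation_contractDiags (by omega) hD hspan,
    contractGraph_mog_eq (by omega) hD hspan, deg2_mog_contractDiags_zero (by omega), ?_, ?_,
    numEssential_add_one_le le_rfl (deg2_mog_contractDiags_zero (by omega))
      (fun j hj => deg2_mog_contractDiags_iff (by omega) hD hspan hj) hd1
      (by rwa [show r + 1 + ((3 : ℕ) : ZMod n) = r + 4 by push_cast; ring]) hblock,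
    domNum_le_domNum_contract_add_one hn hD h1 h2 h3⟩
  · rw [← mem_neighborSet, hnbr, arcProj_self (by omega)]; simp
  · rw [← mem_neighborSet, hnbr, arcProj_add_five (by omega)]; simp
end

section
/- Let n ≥ 5 and let K be the simple graph on vertex set ℤ/nℤ whose edges are the cycle edges {i, i+1} for all i ∈ ℤ/nℤ together with a set S of 2-chords, where a 2-chord is a pair {i−1, i+1} (said to span the vertex i). Assume that there is no i ∈ ℤ/nℤ for which all three 2-chords {i−1, i+1}, {i, i+2}, {i+1, i+3} belong to S (i.e., no three consecutive vertices of the cycle are all spanned by 2-chords of S). If 2·|S| ≥ n + 1, then the domination number of K satisfies γ(K) ≤ ⌈2n/7⌉. -/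
/-!
Call a vertex `j` spanned if the 2-chord `{j - 1, j + 1}` lies in `S`, and give it weight `1`
if it is spanned and `3` otherwise; the total weight is `3n - 2|S| ≤ 2n - 1`. Walk around the
cycle greedily: from the first undominated vertex `p`, one vertex dominates `p, …, p + 4` if
`p + 1` and `p + 3` are spanned, `p, …, p + 3` if `p + 1` or `p + 2` is spanned, and
`p, p + 1, p + 2` otherwise. Since no three consecutive vertices are spanned, a finite check
shows that each block weighs at least `7`, up to a potential in `{0, 1}` carried from block to
block. Hence `K` blocks cover the cycle with `7 (K - 1) ≤ 2n - 1`, i.e. `K ≤ ⌈2n/7⌉`.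
-/

open SimpleGraph

open Finset

namespace ChordedCycle

def weight (c : Bool) : ℕ := if c then 1 else 3

section Greedy

variable (b : ℕ → Bool)

def step (p : ℕ) : ℕ :=
  if b (p + 1) && b (p + 3) then 5 else if b (p + 1) || b (p + 2) then 4 else 3

def center (p : ℕ) : ℕ :=
  if b (p + 1) && b (p + 3) then p + 2
  else if b (p + 2) then p + 1 else if b (p + 1) then p + 2 else p + 1

/-- Every block weighs at least `7` except a 4-block on the pattern spanned, unspanned, spanned,
spanned, which weighs `6`; the potential vanishes at the start of such a block and makes up for
the missing unit. -/
def potential (p : ℕ) : ℕ := if b p && !b (p + 1) && b (p + 3) && !b (p + 4) then 0 else 1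

def frontier : ℕ → ℕ
  | 0 => 0
  | k + 1 => frontier k + step b (frontier k)

variable {b}

theorem three_le_step (p : ℕ) : 3 ≤ step b p := by
  unfold step; split_ifs <;> omega

theorem three_mul_le_frontier (k : ℕ) : 3 * k ≤ frontier b k := by
  induction k with
  | zero => simp [frontier]
  | succ k ih => have := three_le_step (b := b) (frontier b k); simp only [frontier]; omega

theorem exists_block_of_lt_frontier {K j : ℕ} (hj : j < frontier b K) :
    ∃ k < K, frontier b k ≤ j ∧ j < frontier b k + step b (frontier b k) := by
  induction K with
  | zero => simp [frontier] at hj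
  | succ K ih =>
    by_cases hjK : j < frontier b K
    · obtain ⟨k, hk, hkj⟩ := ih hjK
      exact ⟨k, by omega, hkj⟩
    · exact ⟨K, K.lt_succ_self, not_lt.mp hjK, hj⟩

theorem sum_weight_add_two_mul_card (n : ℕ) :
    ∑ j ∈ range n, weight (b j) + 2 * #{j ∈ range n | b j} = 3 * n := by
  rw [card_filter, mul_sum, ← sum_add_distrib,
    sum_congr rfl fun j _ => show weight (b j) + 2 * (if b j then 1 else 0) = 3 by
      cases b j <;> rfl]
  simp [mul_comm]

set_option synthInstance.maxSize 2000 in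
theorem seven_add_potential_le (hb : ∀ j, ¬ (b j && b (j + 1) && b (j + 2))) (p : ℕ) :
    7 + potential b p ≤
      ∑ i ∈ range (step b p), weight (b (p + i)) + potential b (p + step b p) := by
  have h0 := hb p; have h1 := hb (p + 1); have h2 := hb (p + 2); have h3 := hb (p + 3)
  have h4 := hb (p + 4); have h5 := hb (p + 5); have h6 := hb (p + 6); have h7 := hb (p + 7)
  -- both sides only depend on `b p, …, b (p + 9)`, so this is a check of `2 ^ 10` patterns
  unfold step
  split_ifs <;>
  simp only [potential, sum_range_succ, sum_range_zero, add_zero, zero_add, add_assoc,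
    Nat.reduceAdd] at * <;>
  generalize b p = c0, b (p + 1) = c1, b (p + 2) = c2, b (p + 3) = c3, b (p + 4) = c4,
    b (p + 5) = c5, b (p + 6) = c6, b (p + 7) = c7, b (p + 8) = c8, b (p + 9) = c9 at * <;>
  revert c0 c1 c2 c3 c4 c5 c6 c7 c8 c9 <;>
  decide

theorem seven_mul_add_potential_le (hb : ∀ j, ¬ (b j && b (j + 1) && b (j + 2))) (k : ℕ) :
    7 * k + potential b 0 ≤
      ∑ j ∈ range (frontier b k), weight (b j) + potential b (frontier b k) := by
  induction k with
  | zero => simp [frontier]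
  | succ k ih =>
    have := seven_add_potential_le hb (frontier b k)
    rw [frontier, sum_range_add]
    omega

theorem exists_le_frontier_and_seven_mul_le (hb : ∀ j, ¬ (b j && b (j + 1) && b (j + 2)))
    (n : ℕ) : ∃ K, n ≤ frontier b K ∧ 7 * K ≤ ∑ j ∈ range n, weight (b j) + 7 := by
  have hex : ∃ K, n ≤ frontier b K :=
    ⟨n, (Nat.le_mul_of_pos_left n three_pos).trans (three_mul_le_frontier n)⟩
  refine ⟨Nat.find hex, Nat.find_spec hex, ?_⟩
  cases hK : Nat.find hex with
  | zero => omega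
  | succ k =>
    have hk : frontier b k < n := by
      have := Nat.find_min hex (show k < Nat.find hex by omega)
      omega
    have hinv := seven_mul_add_potential_le hb k
    have hpot : potential b (frontier b k) ≤ 1 := by unfold potential; split_ifs <;> omega
    have hweight : 1 ≤ weight (b (frontier b k)) := by unfold weight; split_ifs <;> omega
    have hmono : ∑ j ∈ range (frontier b k + 1), weight (b j) ≤ ∑ j ∈ range n, weight (b j) :=
      sum_le_sum_of_subset (range_subset_range.mpr hk)
    rw [sum_range_succ] at hmono
    omega

variable {V : Type*} {G : SimpleGraph V} {f : ℕ → V}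

theorem center_eq_or_adj (hpath : ∀ q, G.Adj (f q) (f (q + 1)))
    (hchord : ∀ q, b (q + 1) → G.Adj (f q) (f (q + 2))) {p j : ℕ} (hpj : p ≤ j)
    (hj : j < p + step b p) : f (center b p) = f j ∨ G.Adj (f (center b p)) (f j) := by
  obtain ⟨i, rfl⟩ := Nat.exists_eq_add_of_le hpj
  unfold step at hj
  unfold center
  split_ifs at hj ⊢ <;>
  simp only [Bool.and_eq_true, Bool.or_eq_true, Nat.add_lt_add_iff_left] at * <;>
  interval_cases i <;>
  first
  | exact Or.inl rfl
  | exact Or.inr (hpath _) | exact Or.inr (hpath _).symm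
  | exact Or.inr (hchord _ (by tauto)) | exact Or.inr (hchord _ (by tauto)).symm

theorem domNum_le_of_le_frontier [DecidableEq V] (hpath : ∀ q, G.Adj (f q) (f (q + 1)))
    (hchord : ∀ q, b (q + 1) → G.Adj (f q) (f (q + 2))) {K : ℕ}
    (hcover : ∀ v, ∃ j < frontier b K, f j = v) : domNum G ≤ K := by
  set D := (range K).image fun k => f (center b (frontier b k))
  have hD : IsDominating G D := by
    intro v
    obtain ⟨j, hj, rfl⟩ := hcover v
    obtain ⟨k, hk, hkj, hjk⟩ := exists_block_of_lt_frontier hj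
    have hmem : f (center b (frontier b k)) ∈ (D : Set V) := by
      simpa [D] using ⟨k, hk, rfl⟩
    rcases center_eq_or_adj hpath hchord hkj hjk with heq | hadj
    · exact Or.inl (heq ▸ hmem)
    · exact Or.inr ⟨_, hmem, hadj⟩
  calc domNum G ≤ (D : Set V).ncard := Nat.sInf_le ⟨D, hD, rfl⟩
    _ ≤ K := by rw [Set.ncard_coe_finset]; exact card_image_le.trans (card_range K).le

end Greedy

theorem le_ceil_two_mul_div_seven {n K : ℕ} (h : 7 * K ≤ 2 * n + 6) :
    K ≤ ⌈(2 * (n : ℚ)) / 7⌉₊ := by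
  obtain _ | k := K
  · exact Nat.zero_le _
  · refine Nat.lt_ceil.mpr ?_
    rw [lt_div_iff₀ (by norm_num)]
    exact_mod_cast (by omega : k * 7 < 2 * n)

section Spanned

variable {n : ℕ} {S : Finset (Sym2 (ZMod n))}

def spanned (S : Finset (Sym2 (ZMod n))) (j : ℕ) : Bool :=
  decide (s((j : ZMod n) - 1, (j : ZMod n) + 1) ∈ S)

theorem spanned_add_one_iff (j : ℕ) :
    spanned S (j + 1) ↔ s((j : ZMod n), (j : ZMod n) + 2) ∈ S := by
  simp only [spanned, decide_eq_true_eq, Nat.cast_add, Nat.cast_one, add_sub_cancel_right,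
    add_assoc, one_add_one_eq_two]

theorem not_spanned_three
    (h3 : ¬ ∃ i : ZMod n, s(i - 1, i + 1) ∈ S ∧ s(i, i + 2) ∈ S ∧ s(i + 1, i + 3) ∈ S)
    (j : ℕ) : ¬ (spanned S j && spanned S (j + 1) && spanned S (j + 2)) := by
  simp only [Bool.and_eq_true, spanned_add_one_iff, show j + 2 = j + 1 + 1 from rfl]
  rintro ⟨⟨h0, h1⟩, h2⟩
  refine h3 ⟨j, by simpa [spanned] using h0, h1, ?_⟩
  convert h2 using 2 <;> push_cast <;> ring

theorem card_le_card_filter_spanned [NeZero n]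
    (hS : ∀ e ∈ S, ∃ i : ZMod n, e = s(i - 1, i + 1)) :
    #S ≤ #{j ∈ range n | spanned S j} := by
  calc #S ≤ #(({j ∈ range n | spanned S j}).image
        fun j : ℕ => s((j : ZMod n) - 1, (j : ZMod n) + 1)) := by
        refine card_le_card fun e he => ?_
        obtain ⟨i, rfl⟩ := hS e he
        exact mem_image.mpr ⟨i.val, mem_filter.mpr ⟨mem_range.mpr (ZMod.val_lt i),
          by simpa [spanned] using he⟩, by simp⟩
    _ ≤ _ := card_image_le

theorem mog_adj_add_one (hn : 1 < n) (i : ZMod n) : (mog n S).Adj i (i + 1) := by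
  have : Fact (1 < n) := ⟨hn⟩
  rw [mog, fromEdgeSet_adj]
  exact ⟨Or.inl ⟨i, rfl⟩, by simp⟩

theorem mog_adj_add_two (hn : 2 < n) {i : ZMod n} (h : s(i, i + 2) ∈ S) :
    (mog n S).Adj i (i + 2) := by
  have h2 : ((2 : ℕ) : ZMod n) ≠ 0 := by
    rw [Ne, ZMod.natCast_eq_zero_iff]
    exact Nat.not_dvd_of_pos_of_lt two_pos hn
  rw [mog, fromEdgeSet_adj]
  exact ⟨Or.inr h, by simpa using h2⟩

end Spanned

end ChordedCycle

open ChordedCycle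

/-- Theorem 3.2 of [PYZ]. Let `K` be the graph on `ℤ/nℤ`, `n ≥ 5`,
consisting of the cycle `0 1 ⋯ (n-1) 0` together with a set `S` of 2-chords (pairs
`{i-1, i+1}`), such that no three consecutive vertices of the cycle are all spanned by
2-chords of `S`. If `2|S| ≥ n + 1`, then `γ(K) ≤ ⌈2n/7⌉`. -/
theorem statement11 (n : ℕ) (hn : 5 ≤ n) (S : Finset (Sym2 (ZMod n)))
    (hS : ∀ e ∈ S, ∃ i : ZMod n, e = s(i - 1, i + 1))
    (h3 : ¬ ∃ i : ZMod n,
      s(i - 1, i + 1) ∈ S ∧ s(i, i + 2) ∈ S ∧ s(i + 1, i + 3) ∈ S)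
    (hcard : n + 1 ≤ 2 * S.card) :
    domNum (SimpleGraph.fromEdgeSet
        ({e | ∃ i : ZMod n, e = s(i, i + 1)} ∪ (S : Set (Sym2 (ZMod n))))) ≤
      ⌈(2 * (n : ℚ)) / 7⌉₊ := by
  have : NeZero n := ⟨by omega⟩
  obtain ⟨K, hnK, hK⟩ := exists_le_frontier_and_seven_mul_le (not_spanned_three h3) n
  have hweight := sum_weight_add_two_mul_card (b := spanned S) n
  have hspanned := card_le_card_filter_spanned hS
  have hdom : domNum (mog n S) ≤ K :=
    domNum_le_of_le_frontier (f := Nat.cast)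
      (fun q => by simpa using mog_adj_add_one (by omega) (q : ZMod n))
      (fun q hq => by simpa using mog_adj_add_two (by omega) ((spanned_add_one_iff q).mp hq))
      (fun v => ⟨v.val, (ZMod.val_lt v).trans_le hnK, by simp⟩)
  exact hdom.trans (le_ceil_two_mul_div_seven (by omega))
end
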